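/- Let X be an n×p real matrix, w ∈ ℝ^n with 1_nᵀ·w = 1, x̄_w = Xᵀ·w, x̄ = n⁻¹·Xᵀ·1_n, X_c = (I_n − n⁻¹·1_n·1_nᵀ)·X, and X_wc = (I_n − 1_n·wᵀ)·X. Then X_wcᵀ·X_wc − X_cᵀ·X_c = n·Xᵀ·(w − n⁻¹·1_n)·(w − n⁻¹·1_n)ᵀ·X = n·(x̄_w − x̄)·(x̄_w − x̄)ᵀ, which is positive semidefinite; it is zero if x̄_w = x̄. -/

import Mathlib

/-!
Centering by the weighted means differs from ordinary centering by a rank-one shift: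
`X_wc = X_c - 1_n (x̄_w - x̄)ᵀ`. Since the columns of `X_c` sum to zero, the cross terms of the
Gram matrix vanish, leaving `X_cᵀ X_c + n (x̄_w - x̄)(x̄_w - x̄)ᵀ`; this is the matrix form of
`∑ (x_k - a)² = ∑ (x_k - x̄)² + n (x̄ - a)²`, valid for every shift `a`.
-/

open Matrix

section

variable {m p R : Type*} [Fintype m]

theorem one_vecMul_centering_mul [DecidableEq m] [Field R] [CharZero R] (X : Matrix m p R) :
    (1 : m → R) ᵥ* ((1 - (Fintype.card m : R)⁻¹ • vecMulVec 1 1 : Matrix m m R) * X) = 0 := by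
  rcases isEmpty_or_nonempty m with hm | hm
  · rw [one_vecMul]; exact Fintype.sum_empty _
  have hcard : (Fintype.card m : R) ≠ 0 := Nat.cast_ne_zero.mpr Fintype.card_ne_zero
  rw [← vecMul_vecMul, vecMul_sub, vecMul_one, vecMul_smul, vecMul_vecMulVec, one_dotProduct_one,
    smul_smul, inv_mul_cancel₀ hcard, one_smul, sub_self, zero_vecMul]

theorem transpose_mul_self_sub_vecMulVec_one [CommRing R] {A : Matrix m p R}
    (hA : (1 : m → R) ᵥ* A = 0) (d : p → R) :
    (A - vecMulVec 1 d)ᵀ * (A - vecMulVec 1 d) = Aᵀ * A + (Fintype.card m : R) • vecMulVec d d := by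
  have hAt : Aᵀ *ᵥ 1 = 0 := by rw [mulVec_transpose, hA]
  rw [transpose_sub, transpose_vecMulVec, Matrix.sub_mul, Matrix.mul_sub, Matrix.mul_sub,
    mul_vecMulVec, hAt, vecMulVec_mul, hA, vecMulVec_mul_vecMulVec, one_dotProduct_one,
    vecMulVec_smul]
  simp

theorem one_sub_vecMulVec_one_mul [DecidableEq m] [Field R] [CharZero R] (X : Matrix m p R)
    (w : m → R) :
    (1 - vecMulVec 1 w : Matrix m m R) * X =
      (1 - (Fintype.card m : R)⁻¹ • vecMulVec 1 1 : Matrix m m R) * X -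
        vecMulVec 1 (Xᵀ *ᵥ (w - (Fintype.card m : R)⁻¹ • 1)) := by
  rw [mulVec_transpose, ← vecMulVec_mul, ← Matrix.sub_mul, vecMulVec_sub, vecMulVec_smul]
  abel_nf

theorem transpose_mul_vecMulVec_mul [CommSemiring R] (X : Matrix m p R) (u : m → R) :
    Xᵀ * vecMulVec u u * X = vecMulVec (Xᵀ *ᵥ u) (Xᵀ *ᵥ u) := by
  rw [mul_vecMulVec, vecMulVec_mul, ← mulVec_transpose]

end

theorem weighted_centering_gram_difference_general (n p : ℕ)
    (X : Matrix (Fin n) (Fin p) ℝ)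
    (w : Fin n → ℝ)
    (xbar : Fin p → ℝ) (hxbar : xbar = (n : ℝ)⁻¹ • (Xᵀ *ᵥ (1 : Fin n → ℝ)))
    (xbarw : Fin p → ℝ) (hxbarw : xbarw = Xᵀ *ᵥ w)
    (Xc : Matrix (Fin n) (Fin p) ℝ)
    (hXc : Xc = (1 - (n : ℝ)⁻¹ • vecMulVec (1 : Fin n → ℝ) (1 : Fin n → ℝ)) * X)
    (Xwc : Matrix (Fin n) (Fin p) ℝ)
    (hXwc : Xwc = (1 - vecMulVec (1 : Fin n → ℝ) w) * X) :
    Xwcᵀ * Xwc - Xcᵀ * Xc =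
      (n : ℝ) •
        (Xᵀ *
          vecMulVec (w - (n : ℝ)⁻¹ • (1 : Fin n → ℝ))
            (w - (n : ℝ)⁻¹ • (1 : Fin n → ℝ)) * X) ∧
    Xwcᵀ * Xwc - Xcᵀ * Xc = (n : ℝ) • vecMulVec (xbarw - xbar) (xbarw - xbar) ∧
    (Xwcᵀ * Xwc - Xcᵀ * Xc).PosSemidef ∧
    (xbarw = xbar → Xwcᵀ * Xwc - Xcᵀ * Xc = 0) := by
  have hd : xbarw - xbar = Xᵀ *ᵥ (w - (n : ℝ)⁻¹ • 1) := by
    rw [hxbarw, hxbar, mulVec_sub, mulVec_smul]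
  have hXc_centered : (1 : Fin n → ℝ) ᵥ* Xc = 0 := by
    simpa only [hXc, Fintype.card_fin] using one_vecMul_centering_mul X
  have hXwc_shift : Xwc = Xc - vecMulVec 1 (xbarw - xbar) := by
    simpa only [hXwc, hXc, hd, Fintype.card_fin] using one_sub_vecMulVec_one_mul X w
  have hgram : Xwcᵀ * Xwc - Xcᵀ * Xc = (n : ℝ) • vecMulVec (xbarw - xbar) (xbarw - xbar) := by
    rw [hXwc_shift, transpose_mul_self_sub_vecMulVec_one hXc_centered, Fintype.card_fin,
      add_sub_cancel_left]
  refine ⟨?_, hgram, ?_, fun h => ?_⟩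
  · rw [hgram, transpose_mul_vecMulVec_mul, hd]
  · simpa only [hgram, star_trivial] using
      (posSemidef_vecMulVec_self_star (xbarw - xbar)).smul (Nat.cast_nonneg' n)
  · rw [hgram, h, sub_self, zero_vecMulVec, smul_zero]

/-- With weights `w` summing to one, `X_c` the ordinarily centered and
`X_wc` the weighted-mean centered design matrix,
`X_wcᵀX_wc − X_cᵀX_c = n·Xᵀ(w − n⁻¹1_n)(w − n⁻¹1_n)ᵀX = n·(x̄_w − x̄)(x̄_w − x̄)ᵀ ⪰ 0`,
with equality to zero if `x̄_w = x̄`. -/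
theorem weighted_centering_gram_difference (n p : ℕ) (hn : 1 ≤ n)
    (X : Matrix (Fin n) (Fin p) ℝ)
    (w : Fin n → ℝ)
    (hwsum : (1 : Fin n → ℝ) ⬝ᵥ w = 1)
    (xbar : Fin p → ℝ) (hxbar : xbar = (n : ℝ)⁻¹ • (Xᵀ *ᵥ (1 : Fin n → ℝ)))
    (xbarw : Fin p → ℝ) (hxbarw : xbarw = Xᵀ *ᵥ w)
    (Xc : Matrix (Fin n) (Fin p) ℝ)
    (hXc : Xc = (1 - (n : ℝ)⁻¹ • vecMulVec (1 : Fin n → ℝ) (1 : Fin n → ℝ)) * X)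
    (Xwc : Matrix (Fin n) (Fin p) ℝ)
    (hXwc : Xwc = (1 - vecMulVec (1 : Fin n → ℝ) w) * X) :
    Xwcᵀ * Xwc - Xcᵀ * Xc =
      (n : ℝ) •
        (Xᵀ *
          vecMulVec (w - (n : ℝ)⁻¹ • (1 : Fin n → ℝ))
            (w - (n : ℝ)⁻¹ • (1 : Fin n → ℝ)) * X) ∧
    Xwcᵀ * Xwc - Xcᵀ * Xc = (n : ℝ) • vecMulVec (xbarw - xbar) (xbarw - xbar) ∧
    (Xwcᵀ * Xwc - Xcᵀ * Xc).PosSemidef ∧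
    (xbarw = xbar → Xwcᵀ * Xwc - Xcᵀ * Xc = 0) :=
  weighted_centering_gram_difference_general n p X w xbar hxbar xbarw hxbarw Xc hXc Xwc hXwc
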